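/- arXiv:1406.1923 — 2 statements merged into one kernel-verified Lean document; each statement's English description precedes it below -/
import Mathlib

section
/- Let s ≥ 0 and r ≥ s + 2 be integers and set x = ⌈r / (r − (s+1))⌉. Then for every integer j with r ≤ j ≤ 2r there exists an integer i with 1 ≤ i ≤ x such that i·(r−(s+1)) + (s+1) ≤ j ≤ i·(r−(s+1)) + r. -/
/-- The transmissions of the nodes `a_1, …, a_x` (where `a_i = i·(r-(s+1))` and
`x = ⌈r/(r-(s+1))⌉`) inform every integer point of `[r, 2r]`. -/
theorem stmt2 (s r : ℤ) (hs : 0 ≤ s) (hr : s + 2 ≤ r)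
    (x : ℤ) (hx : x = ⌈(r : ℚ) / ((r : ℚ) - (s + 1))⌉) :
    ∀ j : ℤ, r ≤ j → j ≤ 2 * r →
      ∃ i : ℤ, 1 ≤ i ∧ i ≤ x ∧
        i * (r - (s + 1)) + (s + 1) ≤ j ∧ j ≤ i * (r - (s + 1)) + r := by
  intro j hj1 hj2
  set d : ℤ := r - (s + 1) with hd
  have hd0 : 0 < d := by omega
  have hdq : (0:ℚ) < (d:ℚ) := by exact_mod_cast hd0
  have hcast : ((d : ℤ) : ℚ) = (r : ℚ) - (s + 1) := by
    rw [hd]; push_cast; ring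
  set c : ℤ := ⌈((j:ℚ) - r) / (d:ℚ)⌉ with hc
  have hcx : c ≤ x := by
    rw [hx, ← hcast]
    apply Int.ceil_mono
    have hj : (j:ℚ) ≤ 2 * r := by exact_mod_cast hj2
    gcongr
    linarith
  have h1x : (1:ℤ) ≤ x := by
    rw [hx, ← hcast]
    have : (0:ℚ) < (r:ℚ) / (d:ℚ) := by
      apply div_pos _ hdq
      exact_mod_cast (by omega : (0:ℤ) < r)
    have := Int.lt_ceil.mpr (by exact_mod_cast this : ((0:ℤ):ℚ) < (r:ℚ)/(d:ℚ))
    omega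
  -- lower bound on c*d : c*d ≥ j - r
  have hcd1 : j - r ≤ c * d := by
    have h := Int.le_ceil (((j:ℚ) - r) / (d:ℚ))
    rw [div_le_iff₀ hdq] at h
    show (j - r : ℤ) ≤ ⌈((j:ℚ) - r) / (d:ℚ)⌉ * d
    exact_mod_cast h
  -- upper bound: c*d ≤ j - s - 2
  have hcd2 : c * d ≤ j - s - 2 := by
    have h := Int.ceil_lt_add_one (((j:ℚ) - r) / (d:ℚ))
    have h2 : ((c:ℚ) - 1) * d < (j:ℚ) - r := by
      rw [← lt_div_iff₀ hdq]
      linarith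
    have h2' : (c:ℚ) * d < ((j:ℚ) - r) + d := by nlinarith
    have h3 : c * d < (j - r) + d := by
      have : ((c * d : ℤ) : ℚ) < (((j - r) + d : ℤ) : ℚ) := by push_cast; linarith
      exact_mod_cast this
    omega
  refine ⟨max 1 c, le_max_left _ _, max_le h1x hcx, ?_, ?_⟩
  · rcases max_choice 1 c with h | h <;> rw [h] <;> omega
  · have hmd : c * d ≤ max 1 c * d := by
      apply mul_le_mul_of_nonneg_right (le_max_right _ _) (le_of_lt hd0)
    omega
end

section
/- Let A, B, C, p be points of the Euclidean plane such that the inner product ⟨A − C, B − C⟩ is nonnegative (i.e., the angle ∠ACB is at most π/2), and suppose p lies in the sector at C spanned by A and B, i.e., p = C + α(A − C) + β(B − C) for some reals α, β ≥ 0. If dist(p, C) ≤ dist(p, A) and dist(p, C) ≤ dist(p, B), then p lies in the triangle ACB, i.e., p belongs to the convex hull of {A, B, C}. Equivalently, every point of the sector lying outside the triangle ACB is strictly closer to A or to B than to C. -/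
/-!
Write `u = A - C`, `v = B - C` and `w = p - C = α • u + β • v`. Since `p - A = w - u`, the
condition `‖w‖ ≤ ‖w - u‖` reads `2 ⟪w, u⟫ ≤ ‖u‖²`, i.e. `2α‖u‖² + 2β⟪u, v⟫ ≤ ‖u‖²`. As the angle
at `C` is not obtuse, this forces `α ≤ 1/2` unless `u = 0`, so `α` may be replaced by
`min α (1/2)` without moving `p`; likewise for `β`. The new coefficients sum to at most `1`.
-/

open scoped RealInnerProductSpace

section Convex

variable {E : Type*} [AddCommGroup E] [Module ℝ E]

lemma add_smul_sub_add_smul_sub_mem_convexHull {A B C : E} {α β : ℝ} (hα : 0 ≤ α) (hβ : 0 ≤ β)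
    (hαβ : α + β ≤ 1) :
    C + α • (A - C) + β • (B - C) ∈ convexHull ℝ ({A, B, C} : Set E) := by
  have hmem := (convex_convexHull ℝ ({A, B, C} : Set E)).sum_mem (t := Finset.univ)
    (w := ![α, β, 1 - α - β]) (z := ![A, B, C])
    (by intro i _; fin_cases i <;> simp [hα, hβ]; linarith)
    (by simp [Fin.sum_univ_three])
    (by intro i _; fin_cases i <;> exact subset_convexHull ℝ _ (by simp))
  convert hmem using 1
  simp only [Fin.sum_univ_three, Matrix.cons_val_zero, Matrix.cons_val_one, Matrix.cons_val_two,
    Matrix.tail_cons, Matrix.head_cons]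
  module

end Convex

section InnerProduct

variable {E : Type*} [NormedAddCommGroup E] [InnerProductSpace ℝ E]

lemma two_mul_inner_le_norm_sq_of_norm_le_norm_sub {w u : E} (h : ‖w‖ ≤ ‖w - u‖) :
    2 * ⟪w, u⟫ ≤ ‖u‖ ^ 2 := by
  have hsq : ‖w‖ ^ 2 ≤ ‖w - u‖ ^ 2 := pow_le_pow_left₀ (norm_nonneg w) h 2
  rw [norm_sub_sq_real] at hsq
  linarith

lemma smul_eq_min_half_smul_of_two_mul_le {α : ℝ} {u : E} (h : 2 * α * ‖u‖ ^ 2 ≤ ‖u‖ ^ 2) :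
    α • u = min α (1 / 2) • u := by
  rcases eq_or_ne u 0 with rfl | hu
  · simp
  · have hα : α ≤ 1 / 2 := by nlinarith [pow_pos (norm_pos_iff.mpr hu) 2]
    rw [min_eq_left hα]

lemma smul_eq_min_half_smul_of_norm_le_norm_sub {u v : E} {α β : ℝ} (huv : 0 ≤ ⟪u, v⟫)
    (hβ : 0 ≤ β) (h : ‖α • u + β • v‖ ≤ ‖α • u + β • v - u‖) :
    α • u = min α (1 / 2) • u := by
  have hinner := two_mul_inner_le_norm_sq_of_norm_le_norm_sub h
  rw [inner_add_left, real_inner_smul_left, real_inner_smul_left, real_inner_self_eq_norm_sq,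
    real_inner_comm] at hinner
  exact smul_eq_min_half_smul_of_two_mul_le (by nlinarith [mul_nonneg hβ huv])

end InnerProduct

/-- If the angle `∠ACB` is at most `π/2` and `p` lies in the sector at `C` spanned by
`A` and `B`, then `p` being at least as close to `C` as to both `A` and `B` forces `p`
to lie in the triangle `ACB`: every point of the sector outside the triangle is
strictly closer to `A` or to `B` than to `C`. -/
theorem stmt10 (A B C p : EuclideanSpace ℝ (Fin 2))
    (hangle : 0 ≤ (inner ℝ (A - C) (B - C) : ℝ))
    (α β : ℝ) (hα : 0 ≤ α) (hβ : 0 ≤ β)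
    (hp : p = C + α • (A - C) + β • (B - C))
    (hA : dist p C ≤ dist p A) (hB : dist p C ≤ dist p B) :
    p ∈ convexHull ℝ ({A, B, C} : Set (EuclideanSpace ℝ (Fin 2))) := by
  have hpC : p - C = α • (A - C) + β • (B - C) := by rw [hp]; abel
  have hpA : p - A = α • (A - C) + β • (B - C) - (A - C) := by rw [← hpC]; abel
  have hpB : p - B = β • (B - C) + α • (A - C) - (B - C) := by rw [add_comm, ← hpC]; abel
  rw [dist_eq_norm, dist_eq_norm, hpC, hpA] at hA
  rw [dist_eq_norm, dist_eq_norm, hpC, hpB, add_comm] at hB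
  have hαA := smul_eq_min_half_smul_of_norm_le_norm_sub hangle hβ hA
  have hβB := smul_eq_min_half_smul_of_norm_le_norm_sub (real_inner_comm (A - C) _ ▸ hangle) hα hB
  rw [hp, hαA, hβB]
  exact add_smul_sub_add_smul_sub_mem_convexHull (le_min hα (by norm_num)) (le_min hβ (by norm_num))
    (by linarith [min_le_right α (1 / 2), min_le_right β (1 / 2)])
end
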